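/- On ℝ⁴ with canonical coordinates (q¹,q²,p₁,p₂) and canonical Poisson bracket, the Hamiltonian H(q,p) = p₁p₂ + ½ q¹ p₂² + 2 q¹ q² − (q¹)³ and the function I(q,p) = ½ p₂² + (q¹)² Poisson-commute: {H, I} = 0. Hence the two-dimensional cubic-potential Benenti Hamiltonian H is maximally superintegrable (H and I being functionally independent integrals). -/
import Mathlib


open Finset

noncomputable section

/-- Canonical Poisson bracket on `ℝ⁴ = (Fin 2 → ℝ) × (Fin 2 → ℝ)`
(coordinates `(q¹,q²,p₁,p₂)`). -/
def pbr (f g : (Fin 2 → ℝ) × (Fin 2 → ℝ) → ℝ)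
    (x : (Fin 2 → ℝ) × (Fin 2 → ℝ)) : ℝ :=
  ∑ j : Fin 2,
    (fderiv ℝ f x (Pi.single j 1, 0) * fderiv ℝ g x (0, Pi.single j 1) -
      fderiv ℝ g x (Pi.single j 1, 0) * fderiv ℝ f x (0, Pi.single j 1))

/-- The two-dimensional cubic-potential Benenti Hamiltonian
`H = p₁p₂ + ½ q¹p₂² + 2q¹q² − (q¹)³`. -/
def Hcub (x : (Fin 2 → ℝ) × (Fin 2 → ℝ)) : ℝ :=
  x.2 0 * x.2 1 + (1/2) * x.1 0 * x.2 1 ^ 2 + 2 * x.1 0 * x.1 1 - x.1 0 ^ 3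

/-- The additional integral `I = ½p₂² + (q¹)²`. -/
def Icub (x : (Fin 2 → ℝ) × (Fin 2 → ℝ)) : ℝ :=
  (1/2) * x.2 1 ^ 2 + x.1 0 ^ 2

abbrev EE := (Fin 2 → ℝ) × (Fin 2 → ℝ)

def Qc (i : Fin 2) : EE →L[ℝ] ℝ :=
  (ContinuousLinearMap.proj i).comp (ContinuousLinearMap.fst ℝ (Fin 2 → ℝ) (Fin 2 → ℝ))

def Pc (i : Fin 2) : EE →L[ℝ] ℝ :=
  (ContinuousLinearMap.proj i).comp (ContinuousLinearMap.snd ℝ (Fin 2 → ℝ) (Fin 2 → ℝ))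

lemma hQ (i : Fin 2) (x : EE) : HasFDerivAt (fun x : EE => x.1 i) (Qc i) x :=
  (Qc i).hasFDerivAt

lemma hP (i : Fin 2) (x : EE) : HasFDerivAt (fun x : EE => x.2 i) (Pc i) x :=
  (Pc i).hasFDerivAt

lemma fderiv_H_apply (x v : EE) : fderiv ℝ Hcub x v =
    ((1/2) * x.2 1 ^ 2 + 2 * x.1 1 - 3 * x.1 0 ^ 2) * v.1 0 + 2 * x.1 0 * v.1 1 +
      x.2 1 * v.2 0 + (x.2 0 + x.1 0 * x.2 1) * v.2 1 := by
  have h := ((((hP 0 x).mul (hP 1 x)).add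
      (((hQ 0 x).const_mul (1/2)).mul ((hasDerivAt_pow 2 (x.2 1)).comp_hasFDerivAt x (hP 1 x)))).add
      (((hQ 0 x).const_mul 2).mul (hQ 1 x))).sub ((hasDerivAt_pow 3 (x.1 0)).comp_hasFDerivAt x (hQ 0 x))
  have h2 : HasFDerivAt Hcub _ x := h
  rw [h2.fderiv]
  simp [Qc, Pc]
  ring

lemma fderiv_I_apply (x v : EE) : fderiv ℝ Icub x v =
    2 * x.1 0 * v.1 0 + x.2 1 * v.2 1 := by
  have h := (((hasDerivAt_pow 2 (x.2 1)).comp_hasFDerivAt x (hP 1 x)).const_mul (1/2)).add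
    ((hasDerivAt_pow 2 (x.1 0)).comp_hasFDerivAt x (hQ 0 x))
  have h2 : HasFDerivAt Icub _ x := h
  rw [h2.fderiv]
  simp [Qc, Pc]
  ring

/-- `{H, I} = 0` on all of `ℝ⁴`, and `H` and `I` are functionally
independent integrals, so the two-dimensional cubic-potential Benenti Hamiltonian is
maximally superintegrable. -/
theorem cubic_Benenti_n2_superintegrable :
    (∀ x : (Fin 2 → ℝ) × (Fin 2 → ℝ), pbr Hcub Icub x = 0) ∧
    (∃ x : (Fin 2 → ℝ) × (Fin 2 → ℝ),
      LinearIndependent ℝ ![fderiv ℝ Hcub x, fderiv ℝ Icub x]) := by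
  constructor
  · intro x
    simp only [pbr, Fin.sum_univ_two, fderiv_H_apply, fderiv_I_apply]
    simp [Pi.single_apply]
  · refine ⟨((fun _ => 0), Pi.single 1 1), ?_⟩
    rw [LinearIndependent.pair_iff]
    intro s t h
    have h1 := congrArg (fun L => L ((0 : Fin 2 → ℝ), Pi.single 0 1)) h
    have h2 := congrArg (fun L => L ((0 : Fin 2 → ℝ), Pi.single 1 1)) h
    simp [fderiv_H_apply, fderiv_I_apply, Pi.single_apply] at h1 h2
    exact ⟨h1, h2⟩
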